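/- For every m < 1, the derivative of the complete elliptic integral of the first kind satisfies K'(m) = (1/2) ∫₀¹ ζ² / √((1-ζ²)(1-mζ²)³) dζ. -/

import Mathlib

/-!
Differentiate under the integral sign. On the neighbourhood `x < b` of `m`, with
`b = max 0 ((1 + m) / 2) < 1`, the factor `1 - x ζ²` stays above `1 - b > 0` for `ζ ∈ [0, 1]`,
so both the integrand and its `x`-derivative `ζ² / (2 √((1 - ζ²)(1 - x ζ²)³))` are dominated by
a constant times `1 / √(1 - ζ)`, which is integrable on `[0, 1]`.
-/

/-- The complete elliptic integral of the first kind,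
`K(m) = ∫₀¹ dζ / √((1-ζ²)(1-mζ²))`, defined for `m < 1`. -/
noncomputable def ellipticK (m : ℝ) : ℝ :=
  ∫ ζ in (0:ℝ)..1, 1 / Real.sqrt ((1 - ζ ^ 2) * (1 - m * ζ ^ 2))

open MeasureTheory Set Filter intervalIntegral Interval

lemma hasDerivAt_one_div_sqrt_mul_one_sub_mul {a t x : ℝ} (ha : 0 ≤ a) (hx : 0 < 1 - x * t) :
    HasDerivAt (fun y => 1 / √(a * (1 - y * t))) ((1 / 2) * (t / √(a * (1 - x * t) ^ 3))) x := by
  rcases ha.eq_or_lt with rfl | ha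
  · simpa using hasDerivAt_const x (0 : ℝ)
  have hprod : 0 < a * (1 - x * t) := mul_pos ha hx
  have hlin : HasDerivAt (fun y => a * (1 - y * t)) (a * -t) x := by
    simpa using (((hasDerivAt_id x).mul_const t).const_sub 1).const_mul a
  have hinv := ((Real.hasDerivAt_sqrt hprod.ne').comp x hlin).inv (Real.sqrt_pos.2 hprod).ne'
  simp only [Function.comp_def, ← one_div] at hinv
  refine hinv.congr_deriv ?_
  have hcube : √(a * (1 - x * t) ^ 3) = √(a * (1 - x * t)) * (1 - x * t) := by
    rw [show a * (1 - x * t) ^ 3 = a * (1 - x * t) * (1 - x * t) ^ 2 by ring,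
      Real.sqrt_mul hprod.le, Real.sqrt_sq hx.le]
  rw [hcube, Real.sq_sqrt hprod.le]
  field_simp

lemma one_sub_le_one_sub_mul_sq {b x ζ : ℝ} (hb : 0 ≤ b) (hx : x < b) (hζ : ζ ∈ Icc (0:ℝ) 1) :
    1 - b ≤ 1 - x * ζ ^ 2 := by
  have hζ2 : ζ ^ 2 ≤ 1 := pow_le_one₀ hζ.1 hζ.2
  nlinarith [sq_nonneg ζ]

/-- At `ζ = 1` both sides are `0`, since `1 / 0 = 0`. -/
lemma one_div_sqrt_one_sub_sq_mul_pow_le {ζ u c : ℝ} (n : ℕ) (hζ : ζ ∈ Icc (0:ℝ) 1)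
    (hc : 0 < c) (hcu : c ≤ u) :
    1 / √((1 - ζ ^ 2) * u ^ n) ≤ 1 / √(c ^ n * (1 - ζ)) := by
  obtain ⟨hζ0, hζ1⟩ := hζ
  rcases hζ1.eq_or_lt with rfl | hζ1
  · simp
  refine one_div_le_one_div_of_le (Real.sqrt_pos.2 (by positivity)) (Real.sqrt_le_sqrt ?_)
  rw [mul_comm]
  exact mul_le_mul (by nlinarith) (pow_le_pow_left₀ hc.le hcu n) (by positivity) (by nlinarith)

lemma intervalIntegrable_one_div_sqrt_mul_one_sub {C : ℝ} (hC : 0 ≤ C) :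
    IntervalIntegrable (fun ζ => 1 / √(C * (1 - ζ))) volume 0 1 := by
  have hrpow : IntervalIntegrable (fun ζ : ℝ => (1 - ζ) ^ (-(1 / 2) : ℝ)) volume 0 1 := by
    simpa using ((intervalIntegrable_rpow' (r := -(1 / 2)) (by norm_num)).comp_sub_left 1
      (a := 0) (b := 1)).symm
  refine (hrpow.const_mul (√C)⁻¹).congr_uIoo fun ζ hζ => ?_
  rw [uIoo_of_le zero_le_one] at hζ
  dsimp only
  rw [Real.rpow_neg (by linarith [hζ.2]), ← Real.sqrt_eq_rpow, Real.sqrt_mul hC, one_div, mul_inv]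

theorem hasDerivAt_ellipticK {m : ℝ} (hm : m < 1) :
    HasDerivAt ellipticK
      ((1 / 2) * ∫ ζ in (0:ℝ)..1, ζ ^ 2 / √((1 - ζ ^ 2) * (1 - m * ζ ^ 2) ^ 3)) m := by
  unfold ellipticK
  set b := max 0 ((1 + m) / 2)
  have hmb : m < b := lt_max_of_lt_right (by linarith)
  have hb1 : 0 < 1 - b := sub_pos.2 (max_lt one_pos (by linarith))
  have hIcc : ∀ ζ ∈ Ι (0:ℝ) 1, ζ ∈ Icc (0:ℝ) 1 := fun ζ hζ =>
    Ioc_subset_Icc_self (uIoc_of_le (zero_le_one (α := ℝ)) ▸ hζ)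
  have hlower : ∀ x ∈ Iio b, ∀ ζ ∈ Icc (0:ℝ) 1, 1 - b ≤ 1 - x * ζ ^ 2 := fun x hx ζ hζ =>
    one_sub_le_one_sub_mul_sq (le_max_left _ _) hx hζ
  have hbound : ∀ ζ ∈ Icc (0:ℝ) 1, ∀ x ∈ Iio b,
      ‖(1 / 2) * (ζ ^ 2 / √((1 - ζ ^ 2) * (1 - x * ζ ^ 2) ^ 3))‖
        ≤ (1 / 2) * (1 / √((1 - b) ^ 3 * (1 - ζ))) := by
    intro ζ hζ x hx
    rw [Real.norm_of_nonneg (by positivity)]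
    refine mul_le_mul_of_nonneg_left ?_ (by norm_num)
    calc ζ ^ 2 / √((1 - ζ ^ 2) * (1 - x * ζ ^ 2) ^ 3)
        ≤ 1 / √((1 - ζ ^ 2) * (1 - x * ζ ^ 2) ^ 3) :=
          div_le_div_of_nonneg_right (pow_le_one₀ hζ.1 hζ.2) (Real.sqrt_nonneg _)
      _ ≤ 1 / √((1 - b) ^ 3 * (1 - ζ)) :=
          one_div_sqrt_one_sub_sq_mul_pow_le 3 hζ hb1 (hlower x hx ζ hζ)
  have hderiv : ∀ ζ ∈ Icc (0:ℝ) 1, ∀ x ∈ Iio b,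
      HasDerivAt (fun y => 1 / √((1 - ζ ^ 2) * (1 - y * ζ ^ 2)))
        ((1 / 2) * (ζ ^ 2 / √((1 - ζ ^ 2) * (1 - x * ζ ^ 2) ^ 3))) x := fun ζ hζ x hx =>
    hasDerivAt_one_div_sqrt_mul_one_sub_mul (sub_nonneg.2 (pow_le_one₀ hζ.1 hζ.2))
      (hb1.trans_le (hlower x hx ζ hζ))
  have hint : IntervalIntegrable (fun ζ => 1 / √((1 - ζ ^ 2) * (1 - m * ζ ^ 2))) volume 0 1 := by
    refine (intervalIntegrable_one_div_sqrt_mul_one_sub (C := (1 - b) ^ 1) (by positivity)).mono_fun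
      (Measurable.aestronglyMeasurable (by fun_prop))
      (ae_restrict_of_forall_mem measurableSet_uIoc fun ζ hζ => ?_)
    dsimp only
    rw [Real.norm_of_nonneg (by positivity), Real.norm_of_nonneg (by positivity)]
    simpa using one_div_sqrt_one_sub_sq_mul_pow_le 1 (hIcc ζ hζ) hb1 (hlower m hmb ζ (hIcc ζ hζ))
  simpa only [intervalIntegral.integral_const_mul] using
    (hasDerivAt_integral_of_dominated_loc_of_deriv_le (Iio_mem_nhds hmb)
      (Eventually.of_forall fun x => Measurable.aestronglyMeasurable (by fun_prop)) hint
      (Measurable.aestronglyMeasurable (by fun_prop))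
      (ae_of_all _ fun ζ hζ => hbound ζ (hIcc ζ hζ))
      ((intervalIntegrable_one_div_sqrt_mul_one_sub (by positivity)).const_mul _)
      (ae_of_all _ fun ζ hζ => hderiv ζ (hIcc ζ hζ))).2

theorem deriv_ellipticK (m : ℝ) (hm : m < 1) :
    deriv ellipticK m =
      (1 / 2) * ∫ ζ in (0:ℝ)..1, ζ ^ 2 / Real.sqrt ((1 - ζ ^ 2) * (1 - m * ζ ^ 2) ^ 3) :=
  (hasDerivAt_ellipticK hm).deriv
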